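/- Computation result forms are final: if CompRes⟨Ψ | M⟩ holds (M is a computation result with respect to the set Ψ of promise variables), then there is no computation N with M ⇝ N in the small-step operational semantics of computations. -/
import Mathlib


mutual
/-- Values of the λ_æ calculus (de Bruijn representation). -/
inductive Val (Op : Type) : Type where
  | var : ℕ → Val Op
  | unit : Val Op
  | pair : Val Op → Val Op → Val Op
  | inl : Val Op → Val Op
  | inr : Val Op → Val Op
  | lam : Comp Op → Val Op
  | prom : Val Op → Val Op                  -- fulfilled promise ⟨V⟩
  | box : Val Op → Val Op                   -- boxed value [V]

/-- Computations of the λ_æ calculus (de Bruijn representation). -/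
inductive Comp (Op : Type) : Type where
  | ret : Val Op → Comp Op
  | letin : Comp Op → Comp Op → Comp Op     -- let x = M in N   (N binds 1)
  | app : Val Op → Val Op → Comp Op
  | matchPair : Val Op → Comp Op → Comp Op  -- match V with ⟨x,y⟩ ↦ M  (M binds 2)
  | matchEmpty : Val Op → Comp Op
  | matchSum : Val Op → Comp Op → Comp Op → Comp Op  -- (each branch binds 1)
  | sig : Op → Val Op → Comp Op → Comp Op   -- ↑op(V, M)
  | int : Op → Val Op → Comp Op → Comp Op   -- ↓op(V, M)
  | handler : Op → Comp Op → Val Op → Comp Op → Comp Op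
      -- promise (op x r s ↦ M) @ V as p in N   (M binds 3: x,r,s; N binds 1: p)
  | await : Val Op → Comp Op → Comp Op      -- await V until ⟨x⟩ in M  (M binds 1)
  | unbox : Val Op → Comp Op → Comp Op      -- unbox V as [x] in M  (M binds 1)
  | spawn : Comp Op → Comp Op → Comp Op     -- spawn (M, N)
end

/-- Lifting a renaming under one binder. -/
def liftR (ρ : ℕ → ℕ) : ℕ → ℕ
  | 0 => 0
  | n + 1 => ρ n + 1

mutual
def renameV {Op : Type} (ρ : ℕ → ℕ) : Val Op → Val Op
  | .var n => .var (ρ n)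
  | .unit => .unit
  | .pair a b => .pair (renameV ρ a) (renameV ρ b)
  | .inl a => .inl (renameV ρ a)
  | .inr a => .inr (renameV ρ a)
  | .lam m => .lam (renameC (liftR ρ) m)
  | .prom a => .prom (renameV ρ a)
  | .box a => .box (renameV ρ a)

def renameC {Op : Type} (ρ : ℕ → ℕ) : Comp Op → Comp Op
  | .ret v => .ret (renameV ρ v)
  | .letin m n => .letin (renameC ρ m) (renameC (liftR ρ) n)
  | .app v w => .app (renameV ρ v) (renameV ρ w)
  | .matchPair v m => .matchPair (renameV ρ v) (renameC (liftR (liftR ρ)) m)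
  | .matchEmpty v => .matchEmpty (renameV ρ v)
  | .matchSum v m n =>
      .matchSum (renameV ρ v) (renameC (liftR ρ) m) (renameC (liftR ρ) n)
  | .sig op v m => .sig op (renameV ρ v) (renameC ρ m)
  | .int op v m => .int op (renameV ρ v) (renameC ρ m)
  | .handler op m v n =>
      .handler op (renameC (liftR (liftR (liftR ρ))) m) (renameV ρ v)
        (renameC (liftR ρ) n)
  | .await v m => .await (renameV ρ v) (renameC (liftR ρ) m)
  | .unbox v m => .unbox (renameV ρ v) (renameC (liftR ρ) m)
  | .spawn m n => .spawn (renameC ρ m) (renameC ρ n)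
end

/-- Lifting a substitution under one binder. -/
def liftS {Op : Type} (σ : ℕ → Val Op) : ℕ → Val Op
  | 0 => .var 0
  | n + 1 => renameV Nat.succ (σ n)

mutual
def substV {Op : Type} (σ : ℕ → Val Op) : Val Op → Val Op
  | .var n => σ n
  | .unit => .unit
  | .pair a b => .pair (substV σ a) (substV σ b)
  | .inl a => .inl (substV σ a)
  | .inr a => .inr (substV σ a)
  | .lam m => .lam (substC (liftS σ) m)
  | .prom a => .prom (substV σ a)
  | .box a => .box (substV σ a)

def substC {Op : Type} (σ : ℕ → Val Op) : Comp Op → Comp Op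
  | .ret v => .ret (substV σ v)
  | .letin m n => .letin (substC σ m) (substC (liftS σ) n)
  | .app v w => .app (substV σ v) (substV σ w)
  | .matchPair v m => .matchPair (substV σ v) (substC (liftS (liftS σ)) m)
  | .matchEmpty v => .matchEmpty (substV σ v)
  | .matchSum v m n =>
      .matchSum (substV σ v) (substC (liftS σ) m) (substC (liftS σ) n)
  | .sig op v m => .sig op (substV σ v) (substC σ m)
  | .int op v m => .int op (substV σ v) (substC σ m)
  | .handler op m v n =>
      .handler op (substC (liftS (liftS (liftS σ))) m) (substV σ v)
        (substC (liftS σ) n)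
  | .await v m => .await (substV σ v) (substC (liftS σ) m)
  | .unbox v m => .unbox (substV σ v) (substC (liftS σ) m)
  | .spawn m n => .spawn (substC σ m) (substC σ n)
end

/-- Substitution `[V/0]` of a single value for the last-bound variable. -/
def sub1 {Op : Type} (v : Val Op) : ℕ → Val Op
  | 0 => v
  | n + 1 => .var n

/-- Substitution `[V/1, W/0]` for the two variables of a pair match. -/
def sub2 {Op : Type} (v w : Val Op) : ℕ → Val Op
  | 0 => w
  | 1 => v
  | n + 2 => .var n

/-- Substitution `[V/x, R/r, W/s]` (`x = 2`, `r = 1`, `s = 0`) for the three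
variables of an interrupt handler body. -/
def sub3 {Op : Type} (v r w : Val Op) : ℕ → Val Op
  | 0 => w
  | 1 => r
  | 2 => v
  | n + 3 => .var n

/-- The reinstallation function
`R = fun s' ↦ promise (op x r s ↦ M) @ s' as p in return p`. -/
def reinstall {Op : Type} (op : Op) (M : Comp Op) : Val Op :=
  .lam (.handler op (renameC (liftR (liftR (liftR Nat.succ))) M)
          (.var 0) (.ret (.var 0)))

/-- Small-step operational semantics of computations. -/
inductive Step {Op : Type} : Comp Op → Comp Op → Prop where
  -- standard computation rules
  | beta {M V} : Step (.app (.lam M) V) (substC (sub1 V) M)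
  | letRet {V N} : Step (.letin (.ret V) N) (substC (sub1 V) N)
  | matchPair {V W M} : Step (.matchPair (.pair V W) M) (substC (sub2 V W) M)
  | matchInl {V M N} : Step (.matchSum (.inl V) M N) (substC (sub1 V) M)
  | matchInr {W M N} : Step (.matchSum (.inr W) M N) (substC (sub1 W) N)
  -- algebraicity of signals, interrupt handlers, awaiting, and process creation
  | letSig {op V M N} : Step (.letin (.sig op V M) N) (.sig op V (.letin M N))
  | letHandler {op M V N₁ N₂} :
      Step (.letin (.handler op M V N₁) N₂)
           (.handler op M V (.letin N₁ (renameC (liftR Nat.succ) N₂)))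
  | letAwait {V M N} :
      Step (.letin (.await V M) N)
           (.await V (.letin M (renameC (liftR Nat.succ) N)))
  | letSpawn {M N₁ N₂} : Step (.letin (.spawn M N₁) N₂) (.spawn M (.letin N₁ N₂))
  -- commutativity of signals and process creation with interrupt handlers
  | handlerSig {op M V op' W N} :
      Step (.handler op M V (.sig op' (renameV Nat.succ W) N))
           (.sig op' W (.handler op M V N))
  | handlerSpawn {op M V N₁ N₂} :
      Step (.handler op M V (.spawn (renameC Nat.succ N₁) N₂))
           (.spawn N₁ (.handler op M V N₂))
  -- interrupt propagation
  | intRet {op V W} : Step (.int op V (.ret W)) (.ret W)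
  | intSig {op V op' W M} :
      Step (.int op V (.sig op' W M)) (.sig op' W (.int op V M))
  | intHandler {op V M W N} :
      Step (.int op V (.handler op M W N))
           (.letin (substC (sub3 V (reinstall op M) W) M)
                   (.int op (renameV Nat.succ V) N))
  | intHandlerNeq {op op' V M W N} :
      op ≠ op' →
      Step (.int op' V (.handler op M W N))
           (.handler op M W (.int op' (renameV Nat.succ V) N))
  | intAwait {op V W M} :
      Step (.int op V (.await W M)) (.await W (.int op (renameV Nat.succ V) M))
  | intSpawn {op V M N} : Step (.int op V (.spawn M N)) (.spawn M (.int op V N))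
  -- awaiting a fulfilled promise, and unboxing
  | awaitProm {V M} : Step (.await (.prom V) M) (substC (sub1 V) M)
  | unboxBox {V M} : Step (.unbox (.box V) M) (substC (sub1 V) M)
  -- evaluation contexts
  | ctxLet {M M' N} : Step M M' → Step (.letin M N) (.letin M' N)
  | ctxSig {op V M M'} : Step M M' → Step (.sig op V M) (.sig op V M')
  | ctxInt {op V M M'} : Step M M' → Step (.int op V M) (.int op V M')
  | ctxHandler {op M V N N'} :
      Step N N' → Step (.handler op M V N) (.handler op M V N')
  | ctxSpawn {M N N'} : Step N N' → Step (.spawn M N) (.spawn M N')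

/-- Result forms `RunRes⟨Ψ | M⟩` of computations running inside a process;
`Ψ` is the set of (de Bruijn indices of) promise variables bound by
enveloping interrupt handlers. -/
inductive RunRes {Op : Type} : Set ℕ → Comp Op → Prop where
  | ret {Ψ V} : RunRes Ψ (.ret V)
  | await {Ψ : Set ℕ} {p M} : p ∈ Ψ → RunRes Ψ (.await (.var p) M)
  | handler {Ψ : Set ℕ} {op M V N} :
      RunRes (insert 0 {n | ∃ m ∈ Ψ, n = m + 1}) N →
      RunRes Ψ (.handler op M V N)

/-- Result forms `CompRes⟨Ψ | M⟩` of computations. -/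
inductive CompRes {Op : Type} : Set ℕ → Comp Op → Prop where
  | run {Ψ M} : RunRes Ψ M → CompRes Ψ M
  | sig {Ψ op V M} : CompRes Ψ M → CompRes Ψ (.sig op V M)
  | spawn {Ψ M N} : CompRes Ψ N → CompRes Ψ (.spawn M N)

theorem runRes_final {Op : Type} (Ψ : Set ℕ) (M : Comp Op)
    (h : RunRes Ψ M) : ∀ N : Comp Op, ¬ Step M N := by
  induction h with
  | ret => intro N hs; cases hs
  | await _ => intro N hs; cases hs
  | handler hN ih =>
    intro N hs
    cases hs with
    | handlerSig => cases hN
    | handlerSpawn => cases hN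
    | ctxHandler hs' => exact ih _ hs'

/-- Computation result forms are final: if `CompRes⟨Ψ | M⟩` holds, then there
is no computation `N` with `M ⇝ N`. -/
theorem compRes_final {Op : Type} (Ψ : Set ℕ) (M : Comp Op)
    (h : CompRes Ψ M) : ∀ N : Comp Op, ¬ Step M N := by
  induction h with
  | run hr => exact runRes_final _ _ hr
  | sig _ ih => intro N hs; cases hs with
    | ctxSig hs' => exact ih _ hs'
  | spawn _ ih => intro N hs; cases hs with
    | ctxSpawn hs' => exact ih _ hs'
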